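/- Robustness bound (core of Lemma 2): let M = (M_x)_{x∈X} be a POVM on ℂ^D, let ψ, ψ⊥ ∈ ℂ^D be unit vectors with ⟨ψ, ψ⊥⟩ = 0, and let r ∈ (0, 1]. Define ψ± := (ψ ± ψ⊥)/√2, p±(x) := ⟨ψ±, M_x ψ±⟩, p'(x) := Tr(M_x)/D (a probability distribution on X), and ε± := Σ_{x∈X} min(r·p±(x), (1−r)·p'(x)). Then Σ over x ∈ X with r·⟨ψ, M_x ψ⟩ + (1−r)·p'(x) > 0 of r²·(Re⟨ψ⊥, M_x ψ⟩)² / (r·⟨ψ, M_x ψ⟩ + (1−r)·p'(x)) ≥ r·(1 − Σ_{x∈X} √(p₊(x)·p₋(x))) − ε₊ − ε₋. -/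

import Mathlib

open Matrix
open scoped Classical ComplexOrder

lemma psd_cs {n : ℕ} {N : Matrix (Fin n) (Fin n) ℂ} (hN : N.PosSemidef) (u v : Fin n → ℂ) :
    ((star u ⬝ᵥ (N *ᵥ v)).re)^2 ≤ (star u ⬝ᵥ (N *ᵥ u)).re * (star v ⬝ᵥ (N *ᵥ v)).re := by
  obtain ⟨B, rfl⟩ : ∃ B : Matrix (Fin n) (Fin n) ℂ, N = Bᴴ * B := by
    open scoped MatrixOrder in exact CStarAlgebra.nonneg_iff_eq_star_mul_self.mp hN.nonneg
  have h : ∀ z w : Fin n → ℂ, star z ⬝ᵥ ((Bᴴ*B) *ᵥ w) = star (B *ᵥ z) ⬝ᵥ (B *ᵥ w) := by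
    intro z w
    rw [← Matrix.mulVec_mulVec, Matrix.dotProduct_mulVec, ← Matrix.star_mulVec]
  rw [h, h, h]
  set x := B *ᵥ u
  set y := B *ᵥ v
  have h1 := norm_inner_le_norm (𝕜 := ℂ) ((WithLp.equiv 2 (Fin n → ℂ)).symm x)
    ((WithLp.equiv 2 (Fin n → ℂ)).symm y)
  have EuclideanSpace.inner_piLp_equiv_symm : ∀ a b : Fin n → ℂ,
      inner ℂ ((WithLp.equiv 2 (Fin n → ℂ)).symm a) ((WithLp.equiv 2 (Fin n → ℂ)).symm b)
        = star a ⬝ᵥ b := fun a b => dotProduct_comm _ _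
  rw [EuclideanSpace.inner_piLp_equiv_symm] at h1
  have hx : (star x ⬝ᵥ x).re = ‖(WithLp.equiv 2 (Fin n → ℂ)).symm x‖^2 := by
    rw [← EuclideanSpace.inner_piLp_equiv_symm]
    exact_mod_cast @inner_self_eq_norm_sq ℂ _ _ _ _ _
  have hy : (star y ⬝ᵥ y).re = ‖(WithLp.equiv 2 (Fin n → ℂ)).symm y‖^2 := by
    rw [← EuclideanSpace.inner_piLp_equiv_symm]
    exact_mod_cast @inner_self_eq_norm_sq ℂ _ _ _ _ _
  have h2 : |(star x ⬝ᵥ y).re| ≤ ‖star x ⬝ᵥ y‖ := by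
    exact Complex.abs_re_le_norm _
  have h3 : ((star x ⬝ᵥ y).re)^2 ≤ ‖star x ⬝ᵥ y‖^2 := by
    calc ((star x ⬝ᵥ y).re)^2 = |(star x ⬝ᵥ y).re|^2 := (sq_abs _).symm
    _ ≤ ‖star x ⬝ᵥ y‖^2 := by
        apply pow_le_pow_left₀ (abs_nonneg _) h2
  rw [hx, hy]
  calc ((star x ⬝ᵥ y).re)^2 ≤ ‖star x ⬝ᵥ y‖^2 := h3
  _ ≤ (‖(WithLp.equiv 2 (Fin n → ℂ)).symm x‖ * ‖(WithLp.equiv 2 (Fin n → ℂ)).symm y‖)^2 := by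
      apply pow_le_pow_left₀ (norm_nonneg _) h1
  _ = _ := by ring

lemma trace_re_nonneg {n : ℕ} {N : Matrix (Fin n) (Fin n) ℂ} (hN : N.PosSemidef) :
    0 ≤ N.trace.re := by
  obtain ⟨B, rfl⟩ : ∃ B : Matrix (Fin n) (Fin n) ℂ, N = Bᴴ * B := by
    open scoped MatrixOrder in exact CStarAlgebra.nonneg_iff_eq_star_mul_self.mp hN.nonneg
  rw [Matrix.trace]
  simp only [Matrix.diag, Matrix.mul_apply, Matrix.conjTranspose_apply]
  rw [Complex.re_sum]
  apply Finset.sum_nonneg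
  intro i _
  rw [Complex.re_sum]
  apply Finset.sum_nonneg
  intro j _
  rw [Complex.star_def, ← Complex.normSq_eq_conj_mul_self]
  exact Complex.normSq_nonneg _

lemma herm_re_symm {n : ℕ} {N : Matrix (Fin n) (Fin n) ℂ} (hN : N.IsHermitian)
    (u v : Fin n → ℂ) :
    (star u ⬝ᵥ (N *ᵥ v)).re = (star v ⬝ᵥ (N *ᵥ u)).re := by
  have h : star u ⬝ᵥ (N *ᵥ v) = star (star v ⬝ᵥ (N *ᵥ u)) := by
    rw [Matrix.star_dotProduct]
    congr 1
    rw [Matrix.star_mulVec, hN.eq, ← Matrix.dotProduct_mulVec]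
  rw [h, Complex.star_def, Complex.conj_re]

lemma expand_plus {n : ℕ} (N : Matrix (Fin n) (Fin n) ℂ) (hN : N.IsHermitian)
    (u v : Fin n → ℂ) :
    (star (fun i => (u i + v i)/(Real.sqrt 2 : ℂ)) ⬝ᵥ
      (N *ᵥ fun i => (u i + v i)/(Real.sqrt 2 : ℂ))).re
    = ((star u ⬝ᵥ (N *ᵥ u)).re + (star v ⬝ᵥ (N *ᵥ v)).re)/2 + (star v ⬝ᵥ (N *ᵥ u)).re := by
  have hw : (fun i => (u i + v i)/(Real.sqrt 2 : ℂ)) = ((Real.sqrt 2 : ℂ))⁻¹ • (u + v) := by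
    funext i; simp [div_eq_inv_mul]
  have hconj : star (((Real.sqrt 2 : ℝ) : ℂ))⁻¹ = (((Real.sqrt 2 : ℝ) : ℂ))⁻¹ := by
    rw [star_inv₀, Complex.star_def, Complex.conj_ofReal]
  have h2 : (((Real.sqrt 2 : ℝ) : ℂ))⁻¹ * (((Real.sqrt 2 : ℝ) : ℂ))⁻¹ = (2 : ℂ)⁻¹ := by
    rw [← mul_inv, ← Complex.ofReal_mul, Real.mul_self_sqrt (by norm_num)]
    norm_num
  rw [hw, Matrix.mulVec_smul, star_smul, smul_dotProduct, dotProduct_smul,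
    hconj, smul_eq_mul, smul_eq_mul, ← mul_assoc, h2]
  rw [star_add, Matrix.mulVec_add, add_dotProduct, dotProduct_add,
    dotProduct_add]
  have hcross : (star u ⬝ᵥ (N *ᵥ v)).re = (star v ⬝ᵥ (N *ᵥ u)).re := herm_re_symm hN u v
  have h3 : ((2:ℂ)⁻¹ = (((2:ℝ)⁻¹ : ℝ) : ℂ)) := by norm_num
  rw [h3, Complex.re_ofReal_mul]
  simp only [Complex.add_re]
  rw [hcross]; ring

lemma min_superadd {A B C : ℝ} (hA : 0 ≤ A) (hB : 0 ≤ B) (hC : 0 ≤ C) :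
    min (A+B) C ≤ min A C + min B C := by
  rcases le_total A C with h1 | h1
  · rcases le_total B C with h2 | h2
    · rw [min_eq_left h1, min_eq_left h2]; exact min_le_left _ _
    · rw [min_eq_left h1, min_eq_right h2]
      exact le_trans (min_le_right _ _) (by linarith)
  · rw [min_eq_right h1]
    exact le_trans (min_le_right _ _) (by linarith [le_min hB hC])

set_option maxHeartbeats 1000000 in
lemma key_real (r a b c p' : ℝ) (hr0 : 0 < r) (hr1 : r ≤ 1)
    (ha : 0 ≤ a) (hb : 0 ≤ b) (hp' : 0 ≤ p') (hcs : c^2 ≤ a*b)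
    (pp pm : ℝ) (hpp : pp = (a+b)/2 + c) (hpm : pm = (a+b)/2 - c) :
    r * ((pp+pm)/2 - Real.sqrt (pp*pm)) - min (r*pp) ((1-r)*p') - min (r*pm) ((1-r)*p')
      ≤ if 0 < r*a + (1-r)*p' then r^2*c^2/(r*a + (1-r)*p') else 0 := by
  have hrp : 0 ≤ (1-r)*p' := mul_nonneg (by linarith) hp'
  have hppnn : 0 ≤ pp := by nlinarith [sq_nonneg (a-b), sq_nonneg ((a+b)/2 + c)]
  have hpmnn : 0 ≤ pm := by nlinarith [sq_nonneg (a-b), sq_nonneg ((a+b)/2 - c)]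
  set sp := Real.sqrt pp with hsp
  set sm := Real.sqrt pm with hsm
  have hspnn : 0 ≤ sp := Real.sqrt_nonneg _
  have hsmnn : 0 ≤ sm := Real.sqrt_nonneg _
  have hsp2 : sp^2 = pp := Real.sq_sqrt hppnn
  have hsm2 : sm^2 = pm := Real.sq_sqrt hpmnn
  have hsqrt : Real.sqrt (pp*pm) = sp*sm := Real.sqrt_mul hppnn pm
  have hmin : min (r*pp + r*pm) ((1-r)*p') ≤ min (r*pp) ((1-r)*p') + min (r*pm) ((1-r)*p') :=
    min_superadd (mul_nonneg hr0.le hppnn) (mul_nonneg hr0.le hpmnn) hrp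
  have hfirst : r * ((pp+pm)/2 - Real.sqrt (pp*pm)) = r*(sp-sm)^2/2 := by
    rw [hsqrt, ← hsp2, ← hsm2]; ring
  rw [hfirst]
  have hppm : pp + pm = sp^2 + sm^2 := by rw [hsp2, hsm2]
  have main : r*(sp-sm)^2/2 - min (r*pp + r*pm) ((1-r)*p')
      ≤ if 0 < r*a + (1-r)*p' then r^2*c^2/(r*a + (1-r)*p') else 0 := by
    split_ifs with hd
    · have hc : c = (sp^2 - sm^2)/2 := by rw [hsp2, hsm2]; rw [hpp, hpm]; ring
      have hc2 : c^2 = (sp-sm)^2*(sp+sm)^2/4 := by rw [hc]; ring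
      have hδs : (sp-sm)^2 ≤ (sp+sm)^2 := by nlinarith [mul_nonneg hspnn hsmnn]
      have hs2a : 2*a ≤ (sp+sm)^2 := by
        have h1 : ((a-b)/2)^2 ≤ pp*pm := by rw [hpp, hpm]; nlinarith
        have h2 : (a-b)/2 ≤ sp*sm := by
          calc (a-b)/2 ≤ |(a-b)/2| := le_abs_self _
            _ = Real.sqrt (((a-b)/2)^2) := (Real.sqrt_sq_eq_abs _).symm
            _ ≤ Real.sqrt (pp*pm) := Real.sqrt_le_sqrt h1
            _ = sp*sm := hsqrt
        have hexp : (sp+sm)^2 = pp + pm + 2*(sp*sm) := by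
          rw [← hsp2, ← hsm2]; ring
        linarith [h2, hexp, hpp, hpm]
      have h4d : (0:ℝ) < 4*(r*a + (1-r)*p') := by linarith
      have hrw : r^2*c^2/(r*a + (1-r)*p')
          = r^2*((sp-sm)^2*(sp+sm)^2)/(4*(r*a + (1-r)*p')) := by
        rw [hc2]; field_simp
      have hA : r*(sp-sm)^2/2 - r^2*c^2/(r*a + (1-r)*p') ≤ r*pp + r*pm := by
        have hT0 : 0 ≤ r^2*c^2/(r*a + (1-r)*p') := by positivity
        have h5 : r*(sp-sm)^2/2 ≤ r*pp + r*pm := by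
          have h6 : r*(sp-sm)^2/2 ≤ r*(sp^2+sm^2) := by
            nlinarith [mul_nonneg hr0.le (sq_nonneg (sp+sm))]
          have h7 : r*(sp^2+sm^2) = r*pp + r*pm := by rw [hsp2, hsm2]; ring
          linarith
        linarith
      have hB : r*(sp-sm)^2/2 - r^2*c^2/(r*a + (1-r)*p') ≤ (1-r)*p' := by
        rw [hrw, sub_le_iff_le_add, ← sub_le_iff_le_add', le_div_iff₀ h4d]
        rcases le_total (2*(r*a + (1-r)*p')) (r*(sp+sm)^2) with hcase | hcase
        · nlinarith [mul_nonneg (mul_nonneg hr0.le (sq_nonneg (sp-sm)))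
              (sub_nonneg.2 hcase), mul_nonneg hd.le hrp]
        · have hA2 : 0 ≤ r*(((sp+sm)^2 - (sp-sm)^2)*(2*(r*a + (1-r)*p') - r*(sp+sm)^2)) :=
            mul_nonneg hr0.le (mul_nonneg (by linarith) (by linarith))
          have hB2 : 0 ≤ r^2*((sp+sm)^2*((sp+sm)^2 - 2*a)) :=
            mul_nonneg (sq_nonneg r) (mul_nonneg (sq_nonneg _) (by linarith))
          have hC2 : 0 ≤ ((1-r)*p')*(2*(r*a + (1-r)*p') - r*(sp+sm)^2) :=
            mul_nonneg hrp (by linarith)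
          nlinarith [hA2, hB2, hC2]
      linarith [le_min hA hB]
    · have hd' : r*a + (1-r)*p' ≤ 0 := not_lt.mp hd
      have hra : r*a = 0 := le_antisymm (by linarith) (mul_nonneg hr0.le ha)
      have ha0 : a = 0 := by
        rcases mul_eq_zero.mp hra with h | h
        · exact absurd h hr0.ne'
        · exact h
      have hcc : c^2 = 0 := by
        have h1 : c^2 ≤ 0 := by rw [ha0] at hcs; linarith [hcs]
        exact le_antisymm h1 (sq_nonneg c)
      have hc0 : c = 0 := by
        exact pow_eq_zero_iff (by norm_num) |>.mp hcc
      have hppm2 : pp = pm := by rw [hpp, hpm, hc0]; ring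
      have hspm : sp = sm := by rw [hsp, hsm, hppm2]
      have h1 : 0 ≤ min (r*pp + r*pm) ((1-r)*p') :=
        le_min (by nlinarith [mul_nonneg hr0.le hppnn, mul_nonneg hr0.le hpmnn]) hrp
      rw [hspm]
      linarith [h1]
  have hrw2 : r*(pp+pm) = r*pp + r*pm := by ring
  linarith [main, hmin]

lemma sum_qre_aux {n : ℕ} {Y : Type*} [Fintype Y] (M : Y → Matrix (Fin n) (Fin n) ℂ)
    (hsum : ∑ x, M x = 1) (u : Fin n → ℂ) :
    ∑ x, (star u ⬝ᵥ (M x *ᵥ u)).re = (star u ⬝ᵥ u).re := by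
  have h1 : (∑ x, M x) *ᵥ u = ∑ x, (M x *ᵥ u) := by
    ext i
    simp only [Matrix.mulVec, dotProduct, Finset.sum_apply, Matrix.sum_apply,
      Finset.sum_mul]
    rw [Finset.sum_comm]
  have h2 : star u ⬝ᵥ (∑ x, (M x *ᵥ u)) = ∑ x, star u ⬝ᵥ (M x *ᵥ u) := by
    simp only [dotProduct, Finset.sum_apply, Finset.mul_sum]
    rw [Finset.sum_comm]
  rw [← Complex.re_sum, ← h2, ← h1, hsum, Matrix.one_mulVec]

lemma expand_minus {n : ℕ} (N : Matrix (Fin n) (Fin n) ℂ) (hN : N.IsHermitian)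
    (u v : Fin n → ℂ) :
    (star (fun i => (u i - v i)/(Real.sqrt 2 : ℂ)) ⬝ᵥ
      (N *ᵥ fun i => (u i - v i)/(Real.sqrt 2 : ℂ))).re
    = ((star u ⬝ᵥ (N *ᵥ u)).re + (star v ⬝ᵥ (N *ᵥ v)).re)/2 - (star v ⬝ᵥ (N *ᵥ u)).re := by
  have hneg : (fun i => (u i - v i)/(Real.sqrt 2 : ℂ))
      = (fun i => (u i + (-v) i)/(Real.sqrt 2 : ℂ)) := by
    funext i; simp [sub_eq_add_neg]
  rw [hneg, expand_plus N hN u (-v)]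
  simp only [star_neg, Matrix.mulVec_neg, neg_dotProduct, dotProduct_neg,
    neg_neg, Complex.neg_re]
  ring

/-- Re⟨u, M_x v⟩, the real part of the sesquilinear form of a POVM element. -/
noncomputable def qre {ι X : Type*} [Fintype ι] [Fintype X]
    (M : X → Matrix ι ι ℂ) (u v : ι → ℂ) (x : X) : ℝ :=
  (star u ⬝ᵥ ((M x) *ᵥ v)).re

/-- The distinguishability functional Γ_M(ξ, ξ⊥). -/
noncomputable def Gamma {ι X : Type*} [Fintype ι] [Fintype X]
    (M : X → Matrix ι ι ℂ) (ξ ξperp : ι → ℂ) : ℝ :=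
  ∑ x ∈ Finset.univ.filter (fun x => 0 < qre M ξ ξ x),
    (qre M ξperp ξ x) ^ 2 / qre M ξ ξ x

/-- robustness bound, core of Lemma 2: lower bound on the
Fisher-information coefficient γ_r of the white-noise-admixed state
r·|ψ⟩⟨ψ| + (1−r)·I/D measured with the POVM M. -/
theorem robustness_lower_bound
    {D : ℕ} (hD : 1 ≤ D) {X : Type*} [Fintype X] [Nonempty X]
    (M : X → Matrix (Fin D) (Fin D) ℂ)
    (hpsd : ∀ x, (M x).PosSemidef) (hsum : ∑ x, M x = 1)
    (ψ ψperp : Fin D → ℂ)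
    (hψ : star ψ ⬝ᵥ ψ = 1) (hψperp : star ψperp ⬝ᵥ ψperp = 1)
    (horth : star ψ ⬝ᵥ ψperp = 0)
    (r : ℝ) (hr0 : 0 < r) (hr1 : r ≤ 1)
    (ψplus ψminus : Fin D → ℂ)
    (hplus : ψplus = fun i => (ψ i + ψperp i) / (Real.sqrt 2 : ℂ))
    (hminus : ψminus = fun i => (ψ i - ψperp i) / (Real.sqrt 2 : ℂ))
    (pplus pminus pprime : X → ℝ)
    (hpplus : ∀ x, pplus x = qre M ψplus ψplus x)
    (hpminus : ∀ x, pminus x = qre M ψminus ψminus x)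
    (hpprime : ∀ x, pprime x = (M x).trace.re / D)
    (εplus εminus : ℝ)
    (hεplus : εplus = ∑ x, min (r * pplus x) ((1 - r) * pprime x))
    (hεminus : εminus = ∑ x, min (r * pminus x) ((1 - r) * pprime x)) :
    r * (1 - ∑ x, Real.sqrt (pplus x * pminus x)) - εplus - εminus
      ≤ ∑ x ∈ Finset.univ.filter
          (fun x => 0 < r * qre M ψ ψ x + (1 - r) * pprime x),
          r ^ 2 * (qre M ψperp ψ x) ^ 2
            / (r * qre M ψ ψ x + (1 - r) * pprime x) := by
  have hHerm : ∀ x, (M x).IsHermitian := fun x => (hpsd x).1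
  have hAnn : ∀ x, 0 ≤ qre M ψ ψ x := by
    intro x
    have h := (hpsd x).dotProduct_mulVec_nonneg ψ
    rw [Complex.le_def] at h
    simpa [qre] using h.1
  have hBnn : ∀ x, 0 ≤ qre M ψperp ψperp x := by
    intro x
    have h := (hpsd x).dotProduct_mulVec_nonneg ψperp
    rw [Complex.le_def] at h
    simpa [qre] using h.1
  have hp'nn : ∀ x, 0 ≤ pprime x := by
    intro x
    rw [hpprime]
    exact div_nonneg (trace_re_nonneg (hpsd x)) (Nat.cast_nonneg D)
  have hCS : ∀ x, (qre M ψperp ψ x)^2 ≤ qre M ψ ψ x * qre M ψperp ψperp x := by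
    intro x
    have h := psd_cs (hpsd x) ψperp ψ
    simp only [qre]
    linarith [h]
  have hppx : ∀ x, pplus x = (qre M ψ ψ x + qre M ψperp ψperp x)/2 + qre M ψperp ψ x := by
    intro x
    rw [hpplus x, hplus]
    simp only [qre]
    exact expand_plus (M x) (hHerm x) ψ ψperp
  have hpmx : ∀ x, pminus x = (qre M ψ ψ x + qre M ψperp ψperp x)/2 - qre M ψperp ψ x := by
    intro x
    rw [hpminus x, hminus]
    simp only [qre]
    exact expand_minus (M x) (hHerm x) ψ ψperp
  have horth' : star ψperp ⬝ᵥ ψ = 0 := by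
    rw [Matrix.star_dotProduct, horth, star_zero]
  have hsplus : ∑ x, pplus x = 1 := by
    have h1 : ∑ x, pplus x = (star ψplus ⬝ᵥ ψplus).re := by
      simp only [hpplus, qre]
      exact sum_qre_aux M hsum ψplus
    rw [h1, hplus]
    have h2 := expand_plus (1 : Matrix (Fin D) (Fin D) ℂ) Matrix.isHermitian_one ψ ψperp
    simp only [Matrix.one_mulVec] at h2
    rw [h2, hψ, hψperp, horth']
    norm_num
  have hsminus : ∑ x, pminus x = 1 := by
    have h1 : ∑ x, pminus x = (star ψminus ⬝ᵥ ψminus).re := by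
      simp only [hpminus, qre]
      exact sum_qre_aux M hsum ψminus
    rw [h1, hminus]
    have h2 := expand_minus (1 : Matrix (Fin D) (Fin D) ℂ) Matrix.isHermitian_one ψ ψperp
    simp only [Matrix.one_mulVec] at h2
    rw [h2, hψ, hψperp, horth']
    norm_num
  have hkey : ∀ x : X,
      r * ((pplus x + pminus x)/2 - Real.sqrt (pplus x * pminus x))
        - min (r * pplus x) ((1 - r) * pprime x) - min (r * pminus x) ((1 - r) * pprime x)
      ≤ if 0 < r * qre M ψ ψ x + (1 - r) * pprime x
        then r^2 * (qre M ψperp ψ x)^2 / (r * qre M ψ ψ x + (1 - r) * pprime x) else 0 :=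
    fun x => key_real r (qre M ψ ψ x) (qre M ψperp ψperp x) (qre M ψperp ψ x) (pprime x)
      hr0 hr1 (hAnn x) (hBnn x) (hp'nn x) (hCS x) (pplus x) (pminus x) (hppx x) (hpmx x)
  have hsumle : ∑ x, (r * ((pplus x + pminus x)/2 - Real.sqrt (pplus x * pminus x))
        - min (r * pplus x) ((1 - r) * pprime x) - min (r * pminus x) ((1 - r) * pprime x))
      ≤ ∑ x, (if 0 < r * qre M ψ ψ x + (1 - r) * pprime x
          then r^2 * (qre M ψperp ψ x)^2 / (r * qre M ψ ψ x + (1 - r) * pprime x) else 0) :=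
    Finset.sum_le_sum (fun x _ => hkey x)
  rw [← Finset.sum_filter] at hsumle
  have hLHS : ∑ x, (r * ((pplus x + pminus x)/2 - Real.sqrt (pplus x * pminus x))
        - min (r * pplus x) ((1 - r) * pprime x) - min (r * pminus x) ((1 - r) * pprime x))
      = r * (1 - ∑ x, Real.sqrt (pplus x * pminus x)) - εplus - εminus := by
    rw [hεplus, hεminus, Finset.sum_sub_distrib, Finset.sum_sub_distrib]
    congr 1
    congr 1
    rw [← Finset.mul_sum]
    congr 1
    rw [Finset.sum_sub_distrib]
    congr 1
    rw [← Finset.sum_div, Finset.sum_add_distrib, hsplus, hsminus]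
    norm_num
  rw [hLHS] at hsumle
  exact hsumle
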